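/- Let D_val be a nonempty finite validation set where each validation instance v has a label y_v ∈ Y and a set N_v of training points with |N_v| = K. Define the proxy game on the m labeling functions by the utility v(S) = (1/|D_val|) Σ_{v ∈ D_val} [ (1/K) Σ_{i ∈ N_v} Θ_S^{y_v}(i) − 1/C ] for S ⊆ {1, …, m}. Then the Shapley value of labeling function j in this game equals the WeShap value (1/|D_val|) Σ_{v ∈ D_val} (1/K) Σ_{i ∈ N_v} φ_{ij}^{y_v}. -/

import Mathlib

open Finset

/-- Shapley value of player `j` in the cooperative game `v` on the finite player set `I`. -/
noncomputable def shapley {α : Type*} [DecidableEq α] (I : Finset α) (v : Finset α → ℝ)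
    (j : α) : ℝ :=
  (1 / (I.card : ℝ)) * ∑ S ∈ (I.erase j).powerset,
    (v (insert j S) - v S) / ((I.card - 1).choose S.card : ℝ)

/-- Marginal utility `ψ(a,b)` of a correct LF joining a coalition with `a` correct and `b`
incorrect LFs, with `C` classes. -/
noncomputable def psi (C a b : ℕ) : ℝ :=
  if a + b = 0 then 1 - 1 / (C : ℝ)
  else ((a : ℝ) + 1) / ((a : ℝ) + (b : ℝ) + 1) - (a : ℝ) / ((a : ℝ) + (b : ℝ))

/-- `SV⁺_{p,w}` (equals `0` when `p = 0` since the outer sum is empty). -/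
noncomputable def SVpos (C p w : ℕ) : ℝ :=
  (1 / ((p : ℝ) + (w : ℝ))) * ∑ i ∈ Finset.range p, ∑ j ∈ Finset.range (w + 1),
    psi C i j * ((p - 1).choose i : ℝ) * (w.choose j : ℝ) / ((p + w - 1).choose (i + j) : ℝ)

/-- `SV⁻_{p,w}`. -/
noncomputable def SVneg (C p w : ℕ) : ℝ :=
  ((p : ℝ) / ((p : ℝ) + (w : ℝ)) - 1 / (C : ℝ) - (p : ℝ) * SVpos C p w) / (w : ℝ)

/-- The MV single-point game: `P` the correct players, `W` the incorrect players,
utility `|S ∩ P|/|S| − 1/C` for nonempty `S`, and `0` on the empty coalition. -/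
noncomputable def mvGame {α : Type*} [DecidableEq α] (C : ℕ) (P W : Finset α)
    (S : Finset α) : ℝ :=
  if S = ∅ then 0 else ((S ∩ P).card : ℝ) / (S.card : ℝ) - 1 / (C : ℝ)

/-- Majority-voting prediction `Θ_S^c(i)`: the fraction of non-abstaining LFs in the
coalition `S` that vote class `c` on training point `i`; `1/C` if all LFs in `S` abstain.
Weak labels are `Option (Fin C)`, with `none` meaning abstention. -/
noncomputable def theta (C n m : ℕ) (L : Fin n → Fin m → Option (Fin C))
    (S : Finset (Fin m)) (c : Fin C) (i : Fin n) : ℝ :=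
  if (S.filter (fun j => L i j ≠ none)).card = 0 then 1 / (C : ℝ)
  else ((S.filter (fun j => L i j = some c)).card : ℝ) /
    ((S.filter (fun j => L i j ≠ none)).card : ℝ)

/-- WeShap weight `φ_{ij}^c`. -/
noncomputable def weshapWeight (C n m : ℕ) (L : Fin n → Fin m → Option (Fin C))
    (i : Fin n) (j : Fin m) (c : Fin C) : ℝ :=
  let p := (Finset.univ.filter (fun k : Fin m => L i k = some c)).card
  let w := (Finset.univ.filter (fun k : Fin m => L i k ≠ none ∧ L i k ≠ some c)).card
  if L i j = some c then SVpos C p w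
  else if L i j = none then 0
  else SVneg C p w

/-! By linearity of the Shapley value it suffices to treat, for one training point `i` and one
class `c`, the game `S ↦ Θ_S^c(i)`. Labeling functions abstaining on `i` are null players and can be
removed. On the remaining voters the game only depends on how many correct and how many wrong
votes a coalition holds, so grouping coalitions by these two counts turns the Shapley value of a
correct voter into `SV⁺`. The wrong voters are pairwise symmetric, hence share one value, and
efficiency (the values add up to `Θ_all − Θ_∅ = p/(p+w) − 1/C`) forces that value to be `SV⁻`. -/

lemma cast_choose_ne_zero {n k : ℕ} (h : k ≤ n) : (n.choose k : ℝ) ≠ 0 :=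
  Nat.cast_ne_zero.2 (Nat.choose_pos h).ne'

lemma card_div_choose_pred_eq {n t : ℕ} (h0 : 0 < t) (ht : t ≤ n + 1) :
    (t : ℝ) / n.choose (t - 1) = (n + 1) / (n + 1).choose t := by
  obtain ⟨k, rfl⟩ : ∃ k, t = k + 1 := ⟨t - 1, by omega⟩
  rw [Nat.add_sub_cancel, div_eq_div_iff (cast_choose_ne_zero (by omega))
    (cast_choose_ne_zero ht), mul_comm]
  exact_mod_cast (Nat.add_one_mul_choose_eq n k).symm

lemma card_compl_div_choose_eq {n t : ℕ} (ht : t < n + 1) :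
    ((n + 1 - t : ℕ) : ℝ) / n.choose t = (n + 1) / (n + 1).choose t := by
  rw [div_eq_div_iff (cast_choose_ne_zero (by omega)) (cast_choose_ne_zero ht.le), mul_comm,
    mul_comm _ (n.choose t : ℝ)]
  exact_mod_cast (Nat.choose_mul_succ_eq n t).symm

lemma inv_choose_add_inv_choose_succ {N s : ℕ} (hs : s ≤ N) :
    (1 / (N + 1).choose s + 1 / (N + 1).choose (s + 1) : ℝ) =
      (N + 2) / ((N + 1) * N.choose s) := by
  have hA := cast_choose_ne_zero (Nat.le_succ_of_le hs)
  have hB := cast_choose_ne_zero (Nat.succ_le_succ hs)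
  have hE := cast_choose_ne_zero hs
  have h₁ : ((N + 1).choose (s + 1) * (s + 1) : ℝ) = (N + 1) * N.choose s := by
    exact_mod_cast (Nat.add_one_mul_choose_eq N s).symm
  have h₂ : ((N + 1).choose s * (N + 1 - s) : ℝ) = N.choose s * (N + 1) := by
    have := congrArg (Nat.cast : ℕ → ℝ) (Nat.choose_mul_succ_eq N s)
    push_cast [Nat.cast_sub (Nat.le_succ_of_le hs)] at this
    linear_combination -this
  field_simp
  linear_combination -((N + 1).choose (s + 1) : ℝ) * h₂ - ((N + 1).choose s : ℝ) * h₁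

section ShapleyValue

variable {α β : Type*} [DecidableEq α] [AddCommMonoid β]

lemma sum_sum_powerset_erase_insert (I : Finset α) (G : Finset α → β) :
    ∑ j ∈ I, ∑ S ∈ (I.erase j).powerset, G (insert j S) = ∑ T ∈ I.powerset, #T • G T := by
  have h (j) (hj : j ∈ I) : ∑ S ∈ (I.erase j).powerset, G (insert j S) =
      ∑ T ∈ I.powerset with j ∈ T, G T := by
    refine sum_nbij' (insert j) (erase · j) ?_ ?_ ?_ ?_ (fun _ _ => rfl) <;>
      intro S hS <;> simp only [mem_filter, mem_powerset] at hS ⊢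
    · exact ⟨insert_subset hj (hS.trans (erase_subset _ _)), mem_insert_self _ _⟩
    · exact erase_subset_erase _ hS.1
    · exact erase_insert fun h => by simpa using hS h
    · exact insert_erase hS.2
  rw [sum_congr rfl h, sum_comm' (t' := I.powerset) (s' := id) (by simp; tauto)]
  simp

lemma sum_sum_powerset_erase (I : Finset α) (G : Finset α → β) :
    ∑ j ∈ I, ∑ S ∈ (I.erase j).powerset, G S = ∑ T ∈ I.powerset, (#I - #T) • G T := by
  rw [sum_comm' (t' := I.powerset) (s' := (I \ ·)) (by simp [subset_erase]; tauto)]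
  refine sum_congr rfl fun T hT => ?_
  rw [sum_const, card_sdiff_of_subset (mem_powerset.1 hT)]

lemma sum_powerset_union_of_disjoint {X Y : Finset α}
    (h : Disjoint X Y) (F : Finset α → Finset α → β) :
    ∑ S ∈ (X ∪ Y).powerset, F (S ∩ X) (S ∩ Y) = ∑ A ∈ X.powerset, ∑ B ∈ Y.powerset, F A B := by
  rw [← sum_product']
  refine sum_nbij' (fun S => (S ∩ X, S ∩ Y)) (fun p => p.1 ∪ p.2) ?_ ?_ ?_ ?_ (fun _ _ => rfl)
  · intro S _
    simp [inter_subset_right]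
  · intro p hp
    simp only [mem_product, mem_powerset] at hp ⊢
    exact union_subset_union hp.1 hp.2
  · intro S hS
    simp only [mem_powerset] at hS
    rw [← inter_union_distrib_left, inter_eq_left.2 hS]
  · rintro ⟨A, B⟩ hp
    simp only [mem_product, mem_powerset] at hp
    simp only [union_inter_distrib_right, inter_eq_left.2 hp.1, inter_eq_left.2 hp.2,
      disjoint_iff_inter_eq_empty.1 (h.mono_left hp.1),
      disjoint_iff_inter_eq_empty.1 (h.symm.mono_left hp.2), union_empty, empty_union]

lemma sum_powerset_union_card_of_disjoint {X Y : Finset α} (h : Disjoint X Y)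
    (F : ℕ → ℕ → ℝ) :
    ∑ S ∈ (X ∪ Y).powerset, F #(S ∩ X) #(S ∩ Y) =
      ∑ a ∈ range (#X + 1), ∑ b ∈ range (#Y + 1), (#X).choose a * (#Y).choose b * F a b := by
  rw [sum_powerset_union_of_disjoint h (fun A B => F #A #B)]
  rw [sum_congr rfl fun A _ => sum_powerset_apply_card (F #A),
    sum_powerset_apply_card fun a => ∑ b ∈ range (#Y + 1), (#Y).choose b • F a b]
  simp only [nsmul_eq_mul, mul_sum, mul_assoc]

lemma map_swap_eq_self {s : Finset α} {j k : α} (h : j ∈ s ↔ k ∈ s) :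
    s.map (Equiv.swap j k).toEmbedding = s := by
  ext x
  rw [mem_map_equiv, Equiv.symm_swap]
  rcases eq_or_ne x j with rfl | hxj
  · rw [Equiv.swap_apply_left]; exact h.symm
  rcases eq_or_ne x k with rfl | hxk
  · rw [Equiv.swap_apply_right]; exact h
  · rw [Equiv.swap_apply_of_ne_of_ne hxj hxk]

lemma shapley_sum {ι : Type*} (I : Finset α) (s : Finset ι) (f : ι → Finset α → ℝ) (j : α) :
    shapley I (fun S => ∑ x ∈ s, f x S) j = ∑ x ∈ s, shapley I (f x) j := by
  simp only [shapley, ← mul_sum, ← sum_sub_distrib, sum_div]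
  rw [sum_comm]

lemma shapley_const_mul (I : Finset α) (r : ℝ) (f : Finset α → ℝ) (j : α) :
    shapley I (fun S => r * f S) j = r * shapley I f j := by
  simp only [shapley, ← mul_sub, mul_div_assoc, ← mul_sum]
  ring

lemma shapley_sub_const (I : Finset α) (f : Finset α → ℝ) (r : ℝ) (j : α) :
    shapley I (fun S => f S - r) j = shapley I f j := by
  simp only [shapley, sub_sub_sub_cancel_right]

theorem sum_shapley (I : Finset α) (v : Finset α → ℝ) :
    ∑ j ∈ I, shapley I v j = v I - v ∅ := by
  rcases I.eq_empty_or_nonempty with rfl | hI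
  · simp
  obtain ⟨n, hn⟩ : ∃ n, #I = n + 1 := ⟨#I - 1, by have := hI.card_pos; omega⟩
  have hins : ∑ j ∈ I, ∑ S ∈ (I.erase j).powerset, v (insert j S) / (n.choose #S : ℝ) =
      ∑ T ∈ I.powerset, #T • (v T / (n.choose (#T - 1) : ℝ)) := by
    rw [← sum_sum_powerset_erase_insert]
    refine sum_congr rfl fun j _ => sum_congr rfl fun S hS => ?_
    rw [card_insert_of_notMem fun h => by simpa using mem_powerset.1 hS h, Nat.add_sub_cancel]
  -- both coefficients of `v T` equal `(n + 1) / C(n + 1, #T)`, except at `T = ∅` and `T = I`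
  have hcoeff : ∀ T ∈ I.powerset, #T • (v T / (n.choose (#T - 1) : ℝ)) -
      (#I - #T) • (v T / (n.choose #T : ℝ)) =
      (if T = I then (n + 1) * v T else 0) - (if T = ∅ then (n + 1) * v T else 0) := by
    intro T hT
    have hTI := card_le_card (mem_powerset.1 hT)
    simp only [nsmul_eq_mul, mul_div_left_comm _ (v T)]
    rcases (#T).eq_zero_or_pos with h0 | h0
    · obtain rfl := card_eq_zero.1 h0
      simp [hI.ne_empty.symm, hn, mul_comm]
    rcases hTI.lt_or_eq with hlt | heq
    · have hTI : T ≠ I := by rintro rfl; omega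
      have hT0 : T ≠ ∅ := by rintro rfl; simp at h0
      rw [hn] at hlt ⊢
      rw [if_neg hTI, if_neg hT0, card_div_choose_pred_eq h0 hlt.le, card_compl_div_choose_eq hlt,
        sub_self, sub_self]
    · have hTI : T = I := eq_of_subset_of_card_le (mem_powerset.1 hT) heq.ge
      subst hTI
      rw [if_pos rfl, if_neg hI.ne_empty, Nat.sub_self, card_div_choose_pred_eq h0 (by omega), hn]
      simp [mul_comm]
  simp only [shapley, hn, ← mul_sum, sub_div, sum_sub_distrib, hins, sum_sum_powerset_erase,
    Nat.add_sub_cancel]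
  rw [← hn, ← sum_sub_distrib, sum_congr rfl hcoeff, sum_sub_distrib, sum_ite_eq', sum_ite_eq',
    if_pos (mem_powerset_self I), if_pos (empty_mem_powerset I), hn]
  push_cast
  field_simp

theorem shapley_perm (σ : Equiv.Perm α) {I : Finset α} (hI : I.map σ.toEmbedding = I)
    {v : Finset α → ℝ} (hv : ∀ S, v (S.map σ.toEmbedding) = v S) (j : α) :
    shapley I v (σ j) = shapley I v j := by
  have herase : I.erase (σ j) = (I.erase j).map σ.toEmbedding := by
    rw [map_erase, hI, Equiv.coe_toEmbedding]
  unfold shapley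
  rw [herase]
  refine congrArg _ (sum_equiv (Equiv.finsetCongr σ) (fun S => ?_) fun S _ => ?_).symm
  · rw [mem_powerset, mem_powerset, Equiv.finsetCongr_apply, map_subset_map]
  · have hins : insert (σ j) (S.map σ.toEmbedding) = (insert j S).map σ.toEmbedding := by
      simp [map_insert]
    rw [Equiv.finsetCongr_apply, hins, hv, hv, card_map]

def IsNullPlayer (v : Finset α → ℝ) (a : α) : Prop :=
  ∀ S, v (insert a S) = v S

lemma shapley_eq_zero_of_isNullPlayer {v : Finset α → ℝ} {j : α} (h : IsNullPlayer v j)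
    (I : Finset α) : shapley I v j = 0 := by
  simp [shapley, show ∀ S, v (insert j S) = v S from h]

lemma shapley_insert_of_isNullPlayer {I : Finset α} {v : Finset α → ℝ} {a j : α} (ha : a ∉ I)
    (hj : j ∈ I) (hnull : IsNullPlayer v a) : shapley (insert a I) v j = shapley I v j := by
  obtain ⟨n, hn⟩ : ∃ n, #I = n + 1 := ⟨#I - 1, by have := card_pos.2 ⟨j, hj⟩; omega⟩
  have haj : a ≠ j := by rintro rfl; exact ha hj
  have haI : a ∉ I.erase j := fun h => ha (mem_of_mem_erase h)
  unfold shapley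
  rw [card_insert_of_notMem ha, hn, erase_insert_of_ne haj, sum_powerset_insert haI,
    ← sum_add_distrib, mul_sum, mul_sum]
  -- `S` and `insert a S` have the same marginal contribution, so their weights merge
  refine sum_congr rfl fun S hS => ?_
  have haS : a ∉ S := fun h => haI (mem_powerset.1 hS h)
  have hSn : #S ≤ n := by
    have := card_le_card (mem_powerset.1 hS); rw [card_erase_of_mem hj, hn] at this; omega
  rw [insert_comm, hnull, hnull, card_insert_of_notMem haS]
  simp only [Nat.add_sub_cancel, div_eq_mul_one_div (v (insert j S) - v S), ← mul_add,
    inv_choose_add_inv_choose_succ hSn]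
  push_cast
  field_simp
  ring

lemma shapley_union_of_isNullPlayer {I A : Finset α} {v : Finset α → ℝ} {j : α} (hj : j ∈ I)
    (hA : ∀ a ∈ A, IsNullPlayer v a) : shapley (I ∪ A) v j = shapley I v j := by
  induction A using Finset.induction_on with
  | empty => rw [union_empty]
  | insert a A _ ih =>
    have ih := ih fun b hb => hA b (mem_insert_of_mem hb)
    rw [union_insert]
    by_cases h : a ∈ I ∪ A
    · rw [insert_eq_of_mem h, ih]
    · rw [shapley_insert_of_isNullPlayer h (mem_union_left _ hj) (hA a (mem_insert_self a A)), ih]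

theorem shapley_union_eq_of_card_inter {P W : Finset α} (hPW : Disjoint P W)
    (f : ℕ → ℕ → ℝ) {j : α} (hj : j ∈ P) :
    shapley (P ∪ W) (fun S => f #(S ∩ P) #(S ∩ W)) j =
      1 / (#P + #W : ℝ) * ∑ a ∈ range #P, ∑ b ∈ range (#W + 1),
        (f (a + 1) b - f a b) * ((#P - 1).choose a : ℝ) * ((#W).choose b : ℝ) /
          ((#P + #W - 1).choose (a + b) : ℝ) := by
  have hjW : j ∉ W := disjoint_left.1 hPW hj
  have hdisj : Disjoint (P.erase j) W := hPW.mono_left (erase_subset j P)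
  have hmarg : ∀ S ∈ (P.erase j ∪ W).powerset,
      (f #(insert j S ∩ P) #(insert j S ∩ W) - f #(S ∩ P) #(S ∩ W)) /
          ((#P + #W - 1).choose #S : ℝ) =
        (f (#(S ∩ P.erase j) + 1) #(S ∩ W) - f #(S ∩ P.erase j) #(S ∩ W)) /
          ((#P + #W - 1).choose (#(S ∩ P.erase j) + #(S ∩ W)) : ℝ) := by
    intro S hS
    have hS := mem_powerset.1 hS
    have hjS : j ∉ S := fun h => hjW (by simpa using hS h)
    have hSP : S ∩ P.erase j = S ∩ P := by
      rw [inter_erase, erase_eq_of_notMem (by simp [hjS])]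
    have hcard : #S = #(S ∩ P) + #(S ∩ W) := by
      rw [← hSP, ← card_union_of_disjoint (hdisj.mono inter_subset_right inter_subset_right),
        ← inter_union_distrib_left, inter_eq_left.2 hS]
    rw [hSP, insert_inter_of_mem hj, insert_inter_of_notMem hjW,
      card_insert_of_notMem (by simp [hjS]), hcard]
  unfold shapley
  rw [card_union_of_disjoint hPW, erase_union_distrib, erase_eq_of_notMem hjW, sum_congr rfl hmarg,
    sum_powerset_union_card_of_disjoint hdisj
      (fun a b => (f (a + 1) b - f a b) / ((#P + #W - 1).choose (a + b) : ℝ)),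
    card_erase_of_mem hj, Nat.sub_add_cancel (card_pos.2 ⟨j, hj⟩)]
  push_cast
  congr 1
  refine sum_congr rfl fun a _ => sum_congr rfl fun b _ => ?_
  ring

end ShapleyValue

noncomputable def voteShare (C a b : ℕ) : ℝ :=
  if a + b = 0 then 1 / (C : ℝ) else (a : ℝ) / ((a : ℝ) + (b : ℝ))

lemma psi_eq_voteShare_sub (C a b : ℕ) : psi C a b = voteShare C (a + 1) b - voteShare C a b := by
  by_cases h : a + b = 0
  · obtain ⟨rfl, rfl⟩ : a = 0 ∧ b = 0 := by omega
    simp [psi, voteShare]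
  · rw [psi, voteShare, voteShare, if_neg h, if_neg h, if_neg (by omega)]
    push_cast
    ring

section MajorityVote

variable {C n m : ℕ} (L : Fin n → Fin m → Option (Fin C)) (i : Fin n) (c : Fin C)

def correctVoters : Finset (Fin m) := univ.filter fun k => L i k = some c

def wrongVoters : Finset (Fin m) := univ.filter fun k => L i k ≠ none ∧ L i k ≠ some c

def abstainers : Finset (Fin m) := univ.filter fun k => L i k = none

variable {L i c}

@[simp] lemma mem_correctVoters {k : Fin m} : k ∈ correctVoters L i c ↔ L i k = some c := by
  simp [correctVoters]

@[simp] lemma mem_wrongVoters {k : Fin m} :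
    k ∈ wrongVoters L i c ↔ L i k ≠ none ∧ L i k ≠ some c := by
  simp [wrongVoters]

@[simp] lemma mem_abstainers {k : Fin m} : k ∈ abstainers L i ↔ L i k = none := by
  simp [abstainers]

lemma disjoint_correctVoters_wrongVoters : Disjoint (correctVoters L i c) (wrongVoters L i c) :=
  disjoint_filter.2 fun _ _ h h' => h'.2 h

lemma correctVoters_union_wrongVoters_union_abstainers :
    correctVoters L i c ∪ wrongVoters L i c ∪ abstainers L i = univ := by
  ext k
  simp only [mem_union, mem_correctVoters, mem_wrongVoters, mem_abstainers, mem_univ, iff_true]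
  tauto

lemma theta_eq_voteShare (S : Finset (Fin m)) :
    theta C n m L S c i = voteShare C #(S ∩ correctVoters L i c) #(S ∩ wrongVoters L i c) := by
  have hcorrect : S.filter (fun k => L i k = some c) = S ∩ correctVoters L i c := by
    ext k; simp
  have hvoting : S.filter (fun k => L i k ≠ none) =
      S ∩ correctVoters L i c ∪ S ∩ wrongVoters L i c := by
    ext k
    by_cases h : L i k = some c <;> simp [h]
  rw [theta, voteShare, hcorrect, hvoting, card_union_of_disjoint
    (disjoint_correctVoters_wrongVoters.mono inter_subset_right inter_subset_right)]
  push_cast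
  rfl

lemma isNullPlayer_theta_of_abstain {a : Fin m} (h : L i a = none) :
    IsNullPlayer (fun S => theta C n m L S c i) a := fun S => by
  simp [theta, filter_insert, h]

theorem shapley_theta_of_correct {j : Fin m} (hj : L i j = some c) :
    shapley univ (fun S => theta C n m L S c i) j =
      SVpos C #(correctVoters L i c) #(wrongVoters L i c) := by
  have hjP : j ∈ correctVoters L i c := mem_correctVoters.2 hj
  rw [← correctVoters_union_wrongVoters_union_abstainers,
    shapley_union_of_isNullPlayer (mem_union_left _ hjP) fun a ha =>
      isNullPlayer_theta_of_abstain (mem_abstainers.1 ha),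
    funext theta_eq_voteShare,
    shapley_union_eq_of_card_inter disjoint_correctVoters_wrongVoters _ hjP]
  simp only [SVpos, psi_eq_voteShare_sub]

lemma sum_univ_eq_sum_correctVoters_add (f : Fin m → ℝ) :
    ∑ k, f k = ∑ k ∈ correctVoters L i c, f k + ∑ k ∈ wrongVoters L i c, f k +
      ∑ k ∈ abstainers L i, f k := by
  have hdisj : Disjoint (correctVoters L i c ∪ wrongVoters L i c) (abstainers L i) :=
    disjoint_union_left.2 ⟨disjoint_filter.2 fun _ _ h h' => by simp [h] at h',
      disjoint_filter.2 fun _ _ h h' => h.1 h'⟩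
  rw [← sum_union disjoint_correctVoters_wrongVoters, ← sum_union hdisj,
    correctVoters_union_wrongVoters_union_abstainers]

lemma shapley_theta_eq_of_mem_wrongVoters {j k : Fin m} (hj : j ∈ wrongVoters L i c)
    (hk : k ∈ wrongVoters L i c) :
    shapley univ (fun S => theta C n m L S c i) k =
      shapley univ (fun S => theta C n m L S c i) j := by
  have hP : (correctVoters L i c).map (Equiv.swap j k).toEmbedding = correctVoters L i c :=
    map_swap_eq_self (iff_of_false (disjoint_right.1 disjoint_correctVoters_wrongVoters hj)
      (disjoint_right.1 disjoint_correctVoters_wrongVoters hk))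
  have hW : (wrongVoters L i c).map (Equiv.swap j k).toEmbedding = wrongVoters L i c :=
    map_swap_eq_self (iff_of_true hj hk)
  have hθ (S : Finset (Fin m)) :
      theta C n m L (S.map (Equiv.swap j k).toEmbedding) c i = theta C n m L S c i := by
    rw [theta_eq_voteShare, theta_eq_voteShare]
    nth_rw 1 [← hP, ← hW]
    rw [← map_inter, ← map_inter, card_map, card_map]
  rw [← Equiv.swap_apply_left j k]
  exact shapley_perm _ (map_univ_equiv _) hθ j

theorem shapley_theta_of_wrong {j : Fin m} (h₁ : L i j ≠ none) (h₂ : L i j ≠ some c) :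
    shapley univ (fun S => theta C n m L S c i) j =
      SVneg C #(correctVoters L i c) #(wrongVoters L i c) := by
  set θ := fun S => theta C n m L S c i
  have hjW : j ∈ wrongVoters L i c := mem_wrongVoters.2 ⟨h₁, h₂⟩
  have hw : 0 < #(wrongVoters L i c) := card_pos.2 ⟨j, hjW⟩
  have huniv :
      θ univ = #(correctVoters L i c) / (#(correctVoters L i c) + #(wrongVoters L i c)) := by
    rw [show θ univ = _ from theta_eq_voteShare univ, univ_inter, univ_inter, voteShare,
      if_neg (by omega)]
  have hempty : θ ∅ = 1 / C := by
    simp [θ, theta_eq_voteShare, voteShare]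
  have hefficiency := sum_shapley univ θ
  rw [sum_univ_eq_sum_correctVoters_add,
    sum_congr rfl fun k hk => shapley_theta_of_correct (mem_correctVoters.1 hk),
    sum_congr rfl fun k hk => shapley_theta_eq_of_mem_wrongVoters hjW hk,
    sum_eq_zero fun k hk => shapley_eq_zero_of_isNullPlayer
      (isNullPlayer_theta_of_abstain (mem_abstainers.1 hk)) _,
    sum_const, sum_const, nsmul_eq_mul, nsmul_eq_mul, huniv, hempty] at hefficiency
  rw [SVneg, eq_div_iff (by positivity)]
  linarith

theorem shapley_theta_eq_weshapWeight (j : Fin m) :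
    shapley univ (fun S => theta C n m L S c i) j = weshapWeight C n m L i j c := by
  dsimp only [weshapWeight]
  split_ifs with h₁ h₂
  · exact shapley_theta_of_correct h₁
  · exact shapley_eq_zero_of_isNullPlayer (isNullPlayer_theta_of_abstain h₂) _
  · exact shapley_theta_of_wrong h₂ h₁

end MajorityVote

theorem stmt_12_general (C : ℕ) (n m : ℕ)
    (L : Fin n → Fin m → Option (Fin C))
    {V : Type*} (D : Finset V)
    (yv : V → Fin C) (Nv : V → Finset (Fin n)) (K : ℕ)
    (j : Fin m) :
    shapley (Finset.univ : Finset (Fin m))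
        (fun S => (1 / (D.card : ℝ)) * ∑ v ∈ D,
          ((1 / (K : ℝ)) * ∑ i ∈ Nv v, theta C n m L S (yv v) i - 1 / (C : ℝ))) j =
      (1 / (D.card : ℝ)) * ∑ v ∈ D,
        (1 / (K : ℝ)) * ∑ i ∈ Nv v, weshapWeight C n m L i j (yv v) := by
  rw [shapley_const_mul, shapley_sum]
  congr 1
  refine sum_congr rfl fun v _ => ?_
  rw [shapley_sub_const, shapley_const_mul, shapley_sum]
  simp only [shapley_theta_eq_weshapWeight]

/-- The Shapley value of LF `j` in the proxy game over a validation set `D` equals the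
WeShap value: the average over validation instances of the averaged WeShap weights over
their `K` nearest neighbors. -/
theorem stmt_12 (C : ℕ) (hC : 2 ≤ C) (n m : ℕ) (hn : 1 ≤ n) (hm : 1 ≤ m)
    (L : Fin n → Fin m → Option (Fin C))
    {V : Type*} [DecidableEq V] (D : Finset V) (hD : D.Nonempty)
    (yv : V → Fin C) (Nv : V → Finset (Fin n)) (K : ℕ)
    (hK : ∀ v ∈ D, (Nv v).card = K) (j : Fin m) :
    shapley (Finset.univ : Finset (Fin m))
        (fun S => (1 / (D.card : ℝ)) * ∑ v ∈ D,
          ((1 / (K : ℝ)) * ∑ i ∈ Nv v, theta C n m L S (yv v) i - 1 / (C : ℝ))) j =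
      (1 / (D.card : ℝ)) * ∑ v ∈ D,
        (1 / (K : ℝ)) * ∑ i ∈ Nv v, weshapWeight C n m L i j (yv v) :=
  stmt_12_general C n m L D yv Nv K j
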